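/- arXiv:1609.07235 — 2 statements merged into one kernel-verified Lean document; each statement's English description precedes it below -/
import Mathlib

section
/- Fix an integer m ≥ 2 and a real number a with 0 < a ≤ 1/(m+1). Define the sequence ā = (a_1, a_2, …) by a_k = a^n if k = 2^n for some positive integer n, and a_k = a otherwise, and let I = I_ā be the associated Cantor-like set. Then I is hereditarily non uniformly perfect and dim_H I = (log m)/(−log a). -/
open MeasureTheory Filter Metric

/-- A compact set `F` with at least two points is uniformly perfect if there is `c > 0`
such that for every `a ∈ F` and every `r` with `0 < r < diam F` the annulus
`{y : c·r < ‖y − a‖ < r}` meets `F`. -/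
def UniformlyPerfect {X : Type*} [NormedAddCommGroup X] (F : Set X) : Prop :=
  IsCompact F ∧ F.Nontrivial ∧
    ∃ c : ℝ, 0 < c ∧ ∀ a ∈ F, ∀ r : ℝ, 0 < r → r < Metric.diam F →
      ∃ y ∈ F, c * r < ‖y - a‖ ∧ ‖y - a‖ < r

/-- A compact set is hereditarily non uniformly perfect (HNUP) if no (compact) subset
of it is uniformly perfect. -/
def HNUP {X : Type*} [NormedAddCommGroup X] (E : Set X) : Prop :=
  ∀ F : Set X, F ⊆ E → ¬ UniformlyPerfect F

/-- `A_k = a_1 ⋯ a_k` (with `A_0 = 1`). -/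
noncomputable def cantorA (a : ℕ → ℝ) (k : ℕ) : ℝ := ∏ i ∈ Finset.Icc 1 k, a i

/-- The Cantor-like set
`I_ā = { Σ_{k=1}^∞ d_k (A_{k−1} − A_k)/(m−1) : each d_k ∈ {0, 1, …, m−1} }`. -/
noncomputable def cantorLikeSet (m : ℕ) (a : ℕ → ℝ) : Set ℝ :=
  { x | ∃ d : ℕ → ℕ, (∀ k, d k < m) ∧
      x = ∑' k : ℕ, (d (k + 1) : ℝ) * (cantorA a k - cantorA a (k + 1)) / (m - 1) }

/-!
Points of `I` are coded by their digit sequences. Two points whose digits first differ at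
generation `k + 1` are at least the gap `≍ A_k` between neighbouring intervals apart, while points
sharing their first `k + 1` digits are at most `A_{k+1}` apart. At `k + 1 = 2^n` the ratio
`A_{k+1} / A_k = a^n` tends to `0`, so the annulus of radius equal to that gap around a point
of a subset misses the subset: no subset is uniformly perfect.

Covering `I` by its `m^n` intervals of generation `n`, of length `A_n ≤ a^n`, gives
`dim_H I ≤ log m / -log a`. Conversely `A_k ≥ a^(k + (log₂ k)²)`, so reading the digits of a
point of `I` in base `m` is Hölder on `I` of every exponent `t < log m / -log a`; this map sends
`I` onto `[0, 1]`, whence `t ≤ dim_H I`.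
-/

open Set Asymptotics Topology
open scoped NNReal ENNReal

theorem natCast_mul_rpow_lt_one {N : ℕ} {r d : ℝ} (hr0 : 0 < r) (hr1 : r < 1)
    (hd : Real.log N / -Real.log r < d) : (N : ℝ) * r ^ d < 1 := by
  rcases N.eq_zero_or_pos with rfl | hN
  · simp
  have hlog : Real.log N + d * Real.log r < 0 := by
    have := (div_lt_iff₀ (neg_pos.2 (Real.log_neg hr0 hr1))).1 hd
    linarith
  rw [Real.rpow_def_of_pos hr0, ← Real.exp_log (Nat.cast_pos.2 hN), ← Real.exp_add,
    mul_comm (Real.log r)]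
  exact Real.exp_lt_one_iff.2 hlog

theorem dimH_le_of_forall_subset_iUnion {X : Type*} [EMetricSpace X] [MeasurableSpace X]
    [BorelSpace X] {s : Set X} {N : ℕ}
    {r : ℝ} (hr0 : 0 < r) (hr1 : r < 1) (t : (n : ℕ) → (Fin n → Fin N) → Set X)
    (ht : ∀ n i, ediam (t n i) ≤ ENNReal.ofReal (r ^ n)) (hs : ∀ n, s ⊆ ⋃ i, t n i) :
    dimH s ≤ ENNReal.ofReal (Real.log N / -Real.log r) := by
  refine dimH_le fun d hd => ?_
  by_contra! hlt
  rw [← ENNReal.ofReal_coe_nnreal, ENNReal.ofReal_lt_ofReal_iff'] at hlt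
  have hq := natCast_mul_rpow_lt_one hr0 hr1 hlt.1
  have hsum n :
      ∑ i, ediam (t n i) ^ (d : ℝ) ≤ ENNReal.ofReal (((N : ℝ) * r ^ (d : ℝ)) ^ n) := by
    calc ∑ i, ediam (t n i) ^ (d : ℝ)
        ≤ ∑ _i : Fin n → Fin N, ENNReal.ofReal (r ^ n) ^ (d : ℝ) :=
          Finset.sum_le_sum fun i _ => ENNReal.rpow_le_rpow (ht n i) d.coe_nonneg
      _ = ENNReal.ofReal (((N : ℝ) * r ^ (d : ℝ)) ^ n) := by
          rw [Finset.sum_const, Finset.card_univ, Fintype.card_fun, Fintype.card_fin,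
            Fintype.card_fin, nsmul_eq_mul, ENNReal.ofReal_rpow_of_nonneg (by positivity)
            d.coe_nonneg, ← ENNReal.ofReal_natCast, ← ENNReal.ofReal_mul (by positivity),
            ← Real.rpow_natCast_mul hr0.le, mul_comm (n : ℝ), Real.rpow_mul_natCast hr0.le,
            mul_pow, Nat.cast_pow]
  have hzero : μH[d] s = 0 := by
    refine le_antisymm ?_ zero_le
    calc μH[d] s ≤ liminf (fun n => ∑ i, ediam (t n i) ^ (d : ℝ)) atTop :=
          Measure.hausdorffMeasure_le_liminf_sum _ s (fun n => ENNReal.ofReal (r ^ n))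
            (by simpa using (ENNReal.tendsto_ofReal
              (tendsto_pow_atTop_nhds_zero_of_lt_one hr0.le hr1)))
            t (Eventually.of_forall ht) (Eventually.of_forall hs)
      _ ≤ liminf (fun n => ENNReal.ofReal (((N : ℝ) * r ^ (d : ℝ)) ^ n)) atTop :=
          liminf_le_liminf (Eventually.of_forall hsum)
      _ = 0 := by
          refine Tendsto.liminf_eq ?_
          simpa using (ENNReal.tendsto_ofReal
            (tendsto_pow_atTop_nhds_zero_of_lt_one (by positivity) hq))
  exact ENNReal.top_ne_zero (hd.symm.trans hzero)

theorem holderOnWith_of_dist_le {X Y : Type*} [PseudoMetricSpace X] [PseudoMetricSpace Y]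
    {C r : ℝ≥0} {f : X → Y} {s : Set X}
    (h : ∀ x ∈ s, ∀ y ∈ s, dist (f x) (f y) ≤ C * dist x y ^ (r : ℝ)) :
    HolderOnWith C r f s := fun x hx y hy => by
  rw [edist_dist, edist_dist, ENNReal.ofReal_rpow_of_nonneg dist_nonneg r.coe_nonneg,
    ← ENNReal.ofReal_coe_nnreal, ← ENNReal.ofReal_mul C.coe_nonneg]
  exact ENNReal.ofReal_le_ofReal (h x hx y hy)

namespace CantorLike

variable {m : ℕ} {a : ℕ → ℝ}

lemma cantorA_zero : cantorA a 0 = 1 := by simp [cantorA]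

lemma cantorA_succ (k : ℕ) : cantorA a (k + 1) = cantorA a k * a (k + 1) := by
  rw [cantorA, cantorA, Finset.prod_Icc_succ_top (Nat.le_add_left 1 k)]

lemma cantorA_pos (ha : ∀ k, 0 < a (k + 1)) (k : ℕ) : 0 < cantorA a k := by
  induction k with
  | zero => simp [cantorA_zero]
  | succ k ih => rw [cantorA_succ]; exact mul_pos ih (ha k)

lemma cantorA_le_pow {r : ℝ} (ha : ∀ k, 0 ≤ a (k + 1)) (hr : ∀ k, a (k + 1) ≤ r)
    (k : ℕ) : cantorA a k ≤ r ^ k := by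
  induction k with
  | zero => simp [cantorA_zero]
  | succ k ih =>
    rw [cantorA_succ, pow_succ]
    exact mul_le_mul ih (hr k) (ha k) (pow_nonneg ((ha 0).trans (hr 0)) k)

/-- The distance between the left endpoints of neighbouring intervals of generation `k + 1`
inside one of generation `k`. -/
noncomputable def cantorStep (m : ℕ) (a : ℕ → ℝ) (k : ℕ) : ℝ :=
  (cantorA a k - cantorA a (k + 1)) / (m - 1)

/-- The gap between neighbouring intervals of generation `k + 1`. -/
noncomputable def cantorGap (m : ℕ) (a : ℕ → ℝ) (k : ℕ) : ℝ :=
  cantorStep m a k - cantorA a (k + 1)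

/-- The digit `d k` is the paper's `d_{k+1}`. -/
noncomputable def cantorPoint (m : ℕ) (a : ℕ → ℝ) (d : ℕ → Fin m) : ℝ :=
  ∑' k, (d k : ℝ) * cantorStep m a k

lemma cantorLikeSet_eq_range : cantorLikeSet m a = range (cantorPoint m a) := by
  ext x
  constructor
  · rintro ⟨d, hd, rfl⟩
    exact ⟨fun k => ⟨d (k + 1), hd _⟩, tsum_congr fun k => (mul_div_assoc _ _ _).symm⟩
  · rintro ⟨d, rfl⟩
    exact ⟨fun k => d (k - 1), fun k => (d _).isLt,
      tsum_congr fun k => by simp [cantorStep, mul_div_assoc]⟩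

lemma cantorStep_eq (k : ℕ) :
    cantorStep m a k = cantorA a k * (1 - a (k + 1)) / (m - 1) := by
  rw [cantorStep, cantorA_succ]; ring

section Coding

variable (hm : 2 ≤ m)
include hm

lemma cantorGap_eq (k : ℕ) :
    cantorGap m a k = cantorA a k * (1 - m * a (k + 1)) / (m - 1) := by
  have : (m : ℝ) - 1 ≠ 0 := by
    have : (2 : ℝ) ≤ m := by exact_mod_cast hm
    linarith
  rw [cantorGap, cantorStep_eq, cantorA_succ]
  field_simp
  ring

lemma sum_range_cantorStep (n N : ℕ) :
    ∑ i ∈ Finset.range N, ((m : ℝ) - 1) * cantorStep m a (i + n)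
      = cantorA a n - cantorA a (N + n) := by
  have : (m : ℝ) - 1 ≠ 0 := by
    have : (2 : ℝ) ≤ m := by exact_mod_cast hm
    linarith
  have h := Finset.sum_range_sub' (fun i => cantorA a (i + n)) N
  simp only [zero_add] at h
  rw [← h]
  refine Finset.sum_congr rfl fun i _ => ?_
  rw [cantorStep, mul_div_cancel₀ _ this, add_right_comm]

variable (ha : ∀ k, a (k + 1) ∈ Ioc (0 : ℝ) (1 / (m + 1)))
include ha

lemma tendsto_cantorA : Tendsto (cantorA a) atTop (𝓝 0) := by
  have hm' : (2 : ℝ) ≤ m := by exact_mod_cast hm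
  have hr : (1 : ℝ) / (m + 1) < 1 := by rw [div_lt_one (by positivity)]; linarith
  exact squeeze_zero (fun k => (cantorA_pos (fun k => (ha k).1) k).le)
    (cantorA_le_pow (fun k => (ha k).1.le) (fun k => (ha k).2))
    (tendsto_pow_atTop_nhds_zero_of_lt_one (by positivity) hr)

lemma cantorStep_nonneg (k : ℕ) : 0 ≤ cantorStep m a k := by
  have hm' : (2 : ℝ) ≤ m := by exact_mod_cast hm
  have := cantorA_pos (fun k => (ha k).1) k
  have : a (k + 1) ≤ 1 := (ha k).2.trans (by rw [div_le_one (by positivity)]; linarith)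
  rw [cantorStep_eq]
  exact div_nonneg (mul_nonneg (by positivity) (by linarith)) (by linarith)

lemma sum_range_digit_mul_cantorStep_le (d : ℕ → Fin m) (n N : ℕ) :
    ∑ i ∈ Finset.range N, (d (i + n) : ℝ) * cantorStep m a (i + n) ≤ cantorA a n := by
  calc ∑ i ∈ Finset.range N, (d (i + n) : ℝ) * cantorStep m a (i + n)
      ≤ ∑ i ∈ Finset.range N, ((m : ℝ) - 1) * cantorStep m a (i + n) := by
        gcongr with i
        · exact cantorStep_nonneg hm ha _
        · have := (d (i + n)).isLt
          rw [le_sub_iff_add_le]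
          exact_mod_cast this
    _ = cantorA a n - cantorA a (N + n) := sum_range_cantorStep hm n N
    _ ≤ cantorA a n := sub_le_self _ (cantorA_pos (fun k => (ha k).1) _).le

lemma summable_digit_mul_cantorStep (d : ℕ → Fin m) :
    Summable fun k => (d k : ℝ) * cantorStep m a k :=
  summable_of_sum_range_le (fun k => mul_nonneg (Nat.cast_nonneg _) (cantorStep_nonneg hm ha k))
    (sum_range_digit_mul_cantorStep_le hm ha d 0)

lemma tsum_digit_mul_cantorStep_mem_Icc (d : ℕ → Fin m) (n : ℕ) :
    ∑' k, (d (k + n) : ℝ) * cantorStep m a (k + n) ∈ Icc 0 (cantorA a n) :=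
  ⟨tsum_nonneg fun _ => mul_nonneg (Nat.cast_nonneg _) (cantorStep_nonneg hm ha _),
    Real.tsum_le_of_sum_range_le
      (fun _ => mul_nonneg (Nat.cast_nonneg _) (cantorStep_nonneg hm ha _))
      (sum_range_digit_mul_cantorStep_le hm ha d n)⟩

lemma cantorPoint_eq_sum_add_tsum (d : ℕ → Fin m) (n : ℕ) :
    cantorPoint m a d = ∑ i ∈ Finset.range n, (d i : ℝ) * cantorStep m a i
      + ∑' k, (d (k + n) : ℝ) * cantorStep m a (k + n) :=
  ((summable_digit_mul_cantorStep hm ha d).sum_add_tsum_nat_add n).symm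

lemma cantorA_le_sq_mul_cantorGap (k : ℕ) : cantorA a k ≤ (m : ℝ) ^ 2 * cantorGap m a k := by
  have hm' : (2 : ℝ) ≤ m := by exact_mod_cast hm
  have hA := cantorA_pos (fun k => (ha k).1) k
  have hx : ((m : ℝ) + 1) * a (k + 1) ≤ 1 := by
    have := (ha k).2; rwa [le_div_iff₀' (by positivity)] at this
  have key : (m : ℝ) - 1 ≤ m ^ 2 * (1 - m * a (k + 1)) := by
    nlinarith [mul_le_mul_of_nonneg_left hx (by positivity : (0 : ℝ) ≤ (m : ℝ) ^ 3)]
  rw [cantorGap_eq hm, ← mul_div_assoc, le_div_iff₀ (by linarith)]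
  nlinarith [mul_le_mul_of_nonneg_left key hA.le]

lemma cantorGap_pos (k : ℕ) : 0 < cantorGap m a k := by
  have := cantorA_le_sq_mul_cantorGap hm ha k
  have := cantorA_pos (fun k => (ha k).1) k
  exact pos_of_mul_pos_right (by linarith) (sq_nonneg (m : ℝ))

lemma cantorGap_le_cantorA (k : ℕ) : cantorGap m a k ≤ cantorA a k := by
  have hm' : (2 : ℝ) ≤ m := by exact_mod_cast hm
  have := cantorA_pos (fun k => (ha k).1) k
  have : 0 < (m : ℝ) * a (k + 1) := mul_pos (by positivity) (ha k).1
  rw [cantorGap_eq hm, div_le_iff₀ (by linarith)]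
  nlinarith

lemma antitone_cantorGap : Antitone (cantorGap m a) := by
  have hm' : (2 : ℝ) ≤ m := by exact_mod_cast hm
  refine antitone_nat_of_succ_le fun k => ?_
  have hA := cantorA_pos (fun k => (ha k).1) k
  have hx : ((m : ℝ) + 1) * a (k + 1) ≤ 1 := by
    have := (ha k).2; rwa [le_div_iff₀' (by positivity)] at this
  have : 0 < (m : ℝ) * a (k + 1 + 1) := mul_pos (by positivity) (ha (k + 1)).1
  rw [cantorGap_eq hm, cantorGap_eq hm, cantorA_succ, div_le_div_iff_of_pos_right (by linarith)]
  nlinarith [mul_pos (mul_pos hA (ha k).1) this, mul_le_mul_of_nonneg_left hx hA.le]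

lemma cantorA_succ_le_mul_cantorGap {c : ℝ} {k : ℕ} (h : (m - 1 + c * m) * a (k + 1) ≤ c) :
    cantorA a (k + 1) ≤ c * cantorGap m a k := by
  have hm' : (2 : ℝ) ≤ m := by exact_mod_cast hm
  have hA := cantorA_pos (fun k => (ha k).1) k
  rw [cantorA_succ, cantorGap_eq hm, ← mul_div_assoc, le_div_iff₀ (by linarith)]
  nlinarith [mul_le_mul_of_nonneg_left h hA.le]

lemma abs_cantorPoint_sub_le {d e : ℕ → Fin m} {n : ℕ} (h : ∀ i < n, d i = e i) :
    |cantorPoint m a d - cantorPoint m a e| ≤ cantorA a n := by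
  have hd := tsum_digit_mul_cantorStep_mem_Icc hm ha d n
  have he := tsum_digit_mul_cantorStep_mem_Icc hm ha e n
  rw [cantorPoint_eq_sum_add_tsum hm ha d n, cantorPoint_eq_sum_add_tsum hm ha e n,
    Finset.sum_congr rfl fun i hi => by rw [h i (Finset.mem_range.1 hi)], add_sub_add_left_eq_sub]
  exact abs_sub_le_of_nonneg_of_le hd.1 hd.2 he.1 he.2

lemma cantorGap_le_abs_cantorPoint_sub {d e : ℕ → Fin m} {n : ℕ} (h : ∀ i < n, d i = e i)
    (hn : d n ≠ e n) : cantorGap m a n ≤ |cantorPoint m a d - cantorPoint m a e| := by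
  have hd := tsum_digit_mul_cantorStep_mem_Icc hm ha d (n + 1)
  have he := tsum_digit_mul_cantorStep_mem_Icc hm ha e (n + 1)
  set Td := ∑' k, (d (k + (n + 1)) : ℝ) * cantorStep m a (k + (n + 1))
  set Te := ∑' k, (e (k + (n + 1)) : ℝ) * cantorStep m a (k + (n + 1))
  have hdigit : (1 : ℝ) ≤ |(d n : ℝ) - e n| := by
    have : ((d n : ℕ) : ℤ) ≠ e n := by exact_mod_cast Fin.val_ne_of_ne hn
    exact_mod_cast Int.one_le_abs (sub_ne_zero.2 this)
  have hsplit : cantorPoint m a d - cantorPoint m a e = ((d n : ℝ) - e n) * cantorStep m a n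
      + (Td - Te) := by
    rw [cantorPoint_eq_sum_add_tsum hm ha d (n + 1), cantorPoint_eq_sum_add_tsum hm ha e (n + 1),
      Finset.sum_range_succ, Finset.sum_range_succ,
      Finset.sum_congr rfl fun i hi => by rw [h i (Finset.mem_range.1 hi)]]
    ring
  have hstep : cantorStep m a n ≤ |((d n : ℝ) - e n) * cantorStep m a n| := by
    rw [abs_mul, abs_of_nonneg (cantorStep_nonneg hm ha n)]
    exact le_mul_of_one_le_left (cantorStep_nonneg hm ha n) hdigit
  have htail : |Td - Te| ≤ cantorA a (n + 1) := abs_sub_le_of_nonneg_of_le hd.1 hd.2 he.1 he.2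
  have htri := abs_add_le (((d n : ℝ) - e n) * cantorStep m a n + (Td - Te)) (-(Td - Te))
  rw [add_neg_cancel_right, abs_neg] at htri
  rw [cantorGap, hsplit]
  linarith

lemma eq_of_abs_cantorPoint_sub_lt_cantorGap {d e : ℕ → Fin m} {n : ℕ}
    (h : |cantorPoint m a d - cantorPoint m a e| < cantorGap m a n) : ∀ i ≤ n, d i = e i := by
  intro i
  induction i using Nat.strong_induction_on with
  | _ i ih =>
    intro hi
    by_contra hne
    have := cantorGap_le_abs_cantorPoint_sub hm ha (fun j hj => ih j hj (by omega)) hne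
    linarith [antitone_cantorGap hm ha hi]

lemma cantorPoint_injective : Function.Injective (cantorPoint m a) := fun d e hde =>
  funext fun i => eq_of_abs_cantorPoint_sub_lt_cantorGap hm ha
    (by rw [hde, sub_self, abs_zero]; exact cantorGap_pos hm ha i) i le_rfl

lemma abs_sub_le_cantorA_of_abs_sub_lt_cantorGap {x y : ℝ} (hx : x ∈ cantorLikeSet m a)
    (hy : y ∈ cantorLikeSet m a) {n : ℕ} (h : |x - y| < cantorGap m a n) :
    |x - y| ≤ cantorA a (n + 1) := by
  rw [cantorLikeSet_eq_range] at hx hy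
  obtain ⟨d, rfl⟩ := hx
  obtain ⟨e, rfl⟩ := hy
  exact abs_cantorPoint_sub_le hm ha fun i hi =>
    eq_of_abs_cantorPoint_sub_lt_cantorGap hm ha h i (Nat.lt_succ_iff.1 hi)

lemma cantorLikeSet_subset_iUnion_Icc (n : ℕ) :
    cantorLikeSet m a ⊆ ⋃ w : Fin n → Fin m,
      Icc (∑ i, (w i : ℝ) * cantorStep m a i)
        (∑ i, (w i : ℝ) * cantorStep m a i + cantorA a n) := by
  rw [cantorLikeSet_eq_range]
  rintro _ ⟨d, rfl⟩
  have htail := tsum_digit_mul_cantorStep_mem_Icc hm ha d n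
  refine mem_iUnion.2 ⟨fun i => d i, ?_⟩
  rw [cantorPoint_eq_sum_add_tsum hm ha d n,
    ← Fin.sum_univ_eq_sum_range (fun i => (d i : ℝ) * cantorStep m a i)]
  exact ⟨le_add_of_nonneg_right htail.1, add_le_add_right htail.2 _⟩

theorem hnup_cantorLikeSet (h0 : MapClusterPt (0 : ℝ) atTop a) : HNUP (cantorLikeSet m a) := by
  rintro F hFI ⟨hF, ⟨x, hx, y, hy, hxy⟩, c, hc, hann⟩
  have hdiam : 0 < diam F := (dist_pos.2 hxy).trans_le (dist_le_diam_of_mem hF.isBounded hx hy)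
  have hsmall : ∃ᶠ k in atTop, (m - 1 + c * m) * a (k + 1) < c := by
    have hm' : (2 : ℝ) ≤ m := by exact_mod_cast hm
    have hpos : (0 : ℝ) < m - 1 + c * m := by nlinarith
    have := mapClusterPt_iff_frequently.1 h0 _ (Iio_mem_nhds (div_pos hc hpos))
    rw [← map_add_atTop_eq_nat 1, frequently_map] at this
    exact this.mono fun k hk => by rwa [mem_Iio, lt_div_iff₀' hpos] at hk
  have hgap : ∀ᶠ k in atTop, cantorGap m a k < diam F :=
    (squeeze_zero (fun k => (cantorGap_pos hm ha k).le) (cantorGap_le_cantorA hm ha)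
      (tendsto_cantorA hm ha)).eventually (gt_mem_nhds hdiam)
  obtain ⟨k, hk, hkF⟩ := (hsmall.and_eventually hgap).exists
  obtain ⟨z, hz, hcz, hzx⟩ := hann x hx _ (cantorGap_pos hm ha k) hkF
  rw [Real.norm_eq_abs] at hcz hzx
  have := abs_sub_le_cantorA_of_abs_sub_lt_cantorGap hm ha (hFI hz) (hFI hx) hzx
  have := cantorA_succ_le_mul_cantorGap hm ha hk.le
  linarith

theorem dimH_cantorLikeSet_le {r : ℝ} (hr1 : r < 1) (hr : ∀ k, a (k + 1) ≤ r) :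
    dimH (cantorLikeSet m a) ≤ ENNReal.ofReal (Real.log m / -Real.log r) :=
  dimH_le_of_forall_subset_iUnion ((ha 0).1.trans_le (hr 0)) hr1 _
    (fun n _ => by
      rw [Real.ediam_Icc, add_sub_cancel_left]
      exact ENNReal.ofReal_le_ofReal (cantorA_le_pow (fun k => (ha k).1.le) hr n))
    (cantorLikeSet_subset_iUnion_Icc hm ha)

lemma abs_ofDigits_sub_le_mul_abs_cantorPoint_sub_rpow {C : ℝ} {t : ℝ≥0}
    (hC : ∀ k, ((m : ℝ) ^ k)⁻¹ ≤ C * cantorA a k ^ (t : ℝ)) (d e : ℕ → Fin m) :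
    |Real.ofDigits d - Real.ofDigits e|
      ≤ C * ((m : ℝ) ^ 2) ^ (t : ℝ) *
          |cantorPoint m a d - cantorPoint m a e| ^ (t : ℝ) := by
  have hC0 : 0 ≤ C := zero_le_one.trans (by simpa [cantorA_zero] using hC 0)
  by_cases hde : d = e
  · subst hde
    simp only [sub_self, abs_zero]
    positivity
  classical
  have hex : ∃ n, d n ≠ e n := Function.ne_iff.1 hde
  have hagree : ∀ i < Nat.find hex, d i = e i := fun i hi => not_not.1 (Nat.find_min hex hi)
  calc |Real.ofDigits d - Real.ofDigits e| ≤ ((m : ℝ) ^ Nat.find hex)⁻¹ :=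
        Real.abs_ofDigits_sub_ofDigits_le hagree
    _ ≤ C * cantorA a (Nat.find hex) ^ (t : ℝ) := hC _
    _ ≤ C * ((m : ℝ) ^ 2 * |cantorPoint m a d - cantorPoint m a e|) ^ (t : ℝ) := by
        have hle := (cantorA_le_sq_mul_cantorGap hm ha (Nat.find hex)).trans
          (mul_le_mul_of_nonneg_left
            (cantorGap_le_abs_cantorPoint_sub hm ha hagree (Nat.find_spec hex)) (sq_nonneg _))
        gcongr
        exact (cantorA_pos (fun k => (ha k).1) _).le
    _ = C * ((m : ℝ) ^ 2) ^ (t : ℝ) * |cantorPoint m a d - cantorPoint m a e| ^ (t : ℝ) := by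
        rw [Real.mul_rpow (by positivity) (abs_nonneg _), mul_assoc]

theorem le_dimH_cantorLikeSet {t : ℝ≥0} (ht : 0 < t)
    (hO : (fun k => ((m : ℝ) ^ k)⁻¹) =O[atTop] fun k => cantorA a k ^ (t : ℝ)) :
    (t : ℝ≥0∞) ≤ dimH (cantorLikeSet m a) := by
  have : NeZero m := ⟨by omega⟩
  have hA k : 0 < cantorA a k ^ (t : ℝ) :=
    Real.rpow_pos_of_pos (cantorA_pos (fun k => (ha k).1) k) _
  obtain ⟨C, hC⟩ := (isBigO_nat_atTop_iff fun k hk => absurd hk (hA k).ne').1 hO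
  simp only [norm_inv, norm_pow, Real.norm_natCast, Real.norm_of_nonneg (hA _).le] at hC
  -- `f` reads off the digits of a point of the set and reinterprets them in base `m`
  set f : ℝ → ℝ := fun x => Real.ofDigits (Function.invFun (cantorPoint m a) x)
  have hf d : f (cantorPoint m a d) = Real.ofDigits d :=
    congrArg Real.ofDigits (Function.leftInverse_invFun (cantorPoint_injective hm ha) d)
  have hC0 : 0 ≤ C := zero_le_one.trans (by simpa [cantorA_zero] using hC 0)
  have hHolder :
      HolderOnWith (C * ((m : ℝ) ^ 2) ^ (t : ℝ)).toNNReal t f (cantorLikeSet m a) := by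
    refine holderOnWith_of_dist_le ?_
    rw [cantorLikeSet_eq_range]
    rintro _ ⟨d, rfl⟩ _ ⟨e, rfl⟩
    rw [hf, hf, Real.dist_eq, Real.dist_eq, Real.coe_toNNReal _ (by positivity)]
    exact abs_ofDigits_sub_le_mul_abs_cantorPoint_sub_rpow hm ha hC d e
  have hIcc : Icc (0 : ℝ) 1 ⊆ f '' cantorLikeSet m a := by
    rw [cantorLikeSet_eq_range, ← range_comp]
    intro y hy
    obtain ⟨d, -, rfl⟩ := Real.ofDigits_SurjOn (by omega : 1 < m) hy
    exact ⟨d, hf d⟩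
  have h1 : (1 : ℝ≥0∞) ≤ dimH (cantorLikeSet m a) / t := calc
    1 = dimH (Icc (0 : ℝ) 1) := by
      rw [Real.dimH_of_nonempty_interior (by simp), Module.finrank_self, Nat.cast_one]
    _ ≤ dimH (f '' cantorLikeSet m a) := dimH_mono hIcc
    _ ≤ dimH (cantorLikeSet m a) / t := hHolder.dimH_image_le ht
  rwa [ENNReal.le_div_iff_mul_le (Or.inl (by simpa using ht.ne')) (Or.inl ENNReal.coe_ne_top),
    one_mul] at h1

end Coding

lemma eventually_natLog_sq_le {δ : ℝ} (hδ : 0 < δ) :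
    ∀ᶠ k : ℕ in atTop, ((Nat.log 2 k : ℕ) : ℝ) ^ 2 ≤ δ * k := by
  have hlog2 : 0 < Real.log 2 := Real.log_pos one_lt_two
  have h := ((Real.isLittleO_pow_log_id_atTop (n := 2)).comp_tendsto
    tendsto_natCast_atTop_atTop).bound (mul_pos hδ (pow_pos hlog2 2))
  filter_upwards [h] with k hk
  simp only [Function.comp_apply, id, norm_pow, Real.norm_eq_abs, sq_abs, Nat.abs_cast] at hk
  calc ((Nat.log 2 k : ℕ) : ℝ) ^ 2 ≤ Real.logb 2 k ^ 2 := by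
        gcongr
        exact_mod_cast Real.natLog_le_logb k 2
    _ = Real.log k ^ 2 / Real.log 2 ^ 2 := by rw [Real.logb, div_pow]
    _ ≤ δ * k := by rw [div_le_iff₀ (by positivity)]; linarith

lemma rpow_log_div_neg_log {a x : ℝ} (ha0 : 0 < a) (ha1 : a < 1) (hx : 0 < x) :
    a ^ (Real.log x / -Real.log a) = x⁻¹ := by
  have : Real.log a ≠ 0 := (Real.log_neg ha0 ha1).ne
  rw [Real.rpow_def_of_pos ha0, show Real.log a * (Real.log x / -Real.log a) = -Real.log x by
    field_simp, Real.exp_neg, Real.exp_log hx]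

section DyadicSequence

variable {a : ℝ} {aseq : ℕ → ℝ} (ha0 : 0 < a)
  (h1 : ∀ n : ℕ, 1 ≤ n → aseq (2 ^ n) = a ^ n)
include ha0 h1

lemma mapClusterPt_zero_of_dyadic (ha1 : a < 1) : MapClusterPt (0 : ℝ) atTop aseq := by
  refine MapClusterPt.of_comp (tendsto_pow_atTop_atTop_of_one_lt one_lt_two) (Tendsto.mapClusterPt
    ((tendsto_pow_atTop_nhds_zero_of_lt_one ha0.le ha1).congr' ?_))
  filter_upwards [eventually_ge_atTop 1] with n hn using (h1 n hn).symm

variable (h2 : ∀ k : ℕ, ¬(∃ n : ℕ, 1 ≤ n ∧ k = 2 ^ n) → aseq k = a)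
include h2

lemma dyadic_mem_Ioc (ha1 : a ≤ 1) (k : ℕ) : aseq (k + 1) ∈ Ioc 0 a := by
  by_cases hk : ∃ n : ℕ, 1 ≤ n ∧ k + 1 = 2 ^ n
  · obtain ⟨n, hn, hkn⟩ := hk
    rw [hkn, h1 n hn]
    exact ⟨pow_pos ha0 n, pow_le_of_le_one ha0.le ha1 (by omega)⟩
  · rw [h2 _ hk]
    exact ⟨ha0, le_rfl⟩

lemma pow_le_cantorA_of_dyadic (ha1 : a ≤ 1) (k : ℕ) :
    a ^ (k + Nat.log 2 k ^ 2) ≤ cantorA aseq k := by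
  induction k with
  | zero => simp [cantorA_zero]
  | succ k ih =>
    rw [cantorA_succ]
    by_cases hk : ∃ n : ℕ, 1 ≤ n ∧ k + 1 = 2 ^ n
    · obtain ⟨n, hn, hkn⟩ := hk
      have hlog : Nat.log 2 k < n := Nat.log_lt_of_lt_pow (by
        have := Nat.pow_le_pow_right two_pos hn; omega) (by omega)
      rw [hkn, h1 n hn, Nat.log_pow one_lt_two, ← hkn]
      calc a ^ (k + 1 + n ^ 2) ≤ a ^ (k + Nat.log 2 k ^ 2 + n) :=
            pow_le_pow_of_le_one ha0.le ha1 (by nlinarith)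
        _ = a ^ (k + Nat.log 2 k ^ 2) * a ^ n := pow_add _ _ _
        _ ≤ cantorA aseq k * a ^ n := by gcongr
    · have := Nat.log_mono_right (b := 2) (Nat.le_succ k)
      rw [h2 _ hk]
      calc a ^ (k + 1 + Nat.log 2 (k + 1) ^ 2) ≤ a ^ (k + Nat.log 2 k ^ 2 + 1) :=
            pow_le_pow_of_le_one ha0.le ha1 (by nlinarith)
        _ = a ^ (k + Nat.log 2 k ^ 2) * a := pow_succ _ _
        _ ≤ cantorA aseq k * a := by gcongr

lemma isBigO_inv_pow_cantorA_rpow_of_dyadic {m : ℕ} (hm : 0 < m) (ha1 : a < 1) {t : ℝ}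
    (ht : 0 < t) (hts : t < Real.log m / -Real.log a) :
    (fun k => ((m : ℝ) ^ k)⁻¹) =O[atTop] fun k => cantorA aseq k ^ t := by
  refine IsBigO.of_bound' ?_
  filter_upwards [eventually_natLog_sq_le (div_pos (sub_pos.2 hts) ht)] with k hk
  have hA := pow_le_cantorA_of_dyadic ha0 h1 h2 ha1.le k
  have hexp : t * ((k + Nat.log 2 k ^ 2 : ℕ) : ℝ) ≤ Real.log m / -Real.log a * k := by
    rw [div_mul_eq_mul_div, le_div_iff₀ ht] at hk
    push_cast
    nlinarith
  rw [norm_inv, norm_pow, Real.norm_natCast,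
    Real.norm_of_nonneg (Real.rpow_nonneg ((pow_pos ha0 _).le.trans hA) _)]
  calc ((m : ℝ) ^ k)⁻¹ = a ^ (Real.log m / -Real.log a * k) := by
        rw [Real.rpow_mul_natCast ha0.le, rpow_log_div_neg_log ha0 ha1 (by exact_mod_cast hm),
          inv_pow]
    _ ≤ a ^ (t * ((k + Nat.log 2 k ^ 2 : ℕ) : ℝ)) :=
        Real.rpow_le_rpow_of_exponent_ge ha0 ha1.le hexp
    _ = (a ^ (k + Nat.log 2 k ^ 2)) ^ t := by rw [mul_comm, Real.rpow_natCast_mul ha0.le]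
    _ ≤ cantorA aseq k ^ t := Real.rpow_le_rpow (pow_pos ha0 _).le hA ht.le

end DyadicSequence

end CantorLike

open CantorLike

/-- For `a_k = a^n` when `k = 2^n` (`n ≥ 1`) and `a_k = a` otherwise, the Cantor-like
set `I = I_ā` is HNUP and `dim_H I = log m / (−log a)`. -/
theorem stmt7 (m : ℕ) (hm : 2 ≤ m) (a : ℝ) (ha0 : 0 < a) (ha1 : a ≤ 1 / (m + 1))
    (aseq : ℕ → ℝ)
    (h1 : ∀ n : ℕ, 1 ≤ n → aseq (2 ^ n) = a ^ n)
    (h2 : ∀ k : ℕ, ¬(∃ n : ℕ, 1 ≤ n ∧ k = 2 ^ n) → aseq k = a) :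
    HNUP (cantorLikeSet m aseq) ∧
      dimH (cantorLikeSet m aseq) = ENNReal.ofReal (Real.log m / (-Real.log a)) := by
  have hlt : a < 1 := ha1.trans_lt <| by
    rw [div_lt_one (by positivity)]
    exact_mod_cast Nat.lt_succ_of_lt hm
  have hmem := dyadic_mem_Ioc ha0 h1 h2 hlt.le
  have ha : ∀ k, aseq (k + 1) ∈ Ioc (0 : ℝ) (1 / (m + 1)) :=
    fun k => ⟨(hmem k).1, (hmem k).2.trans ha1⟩
  refine ⟨hnup_cantorLikeSet hm ha (mapClusterPt_zero_of_dyadic ha0 h1 hlt),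
    le_antisymm (dimH_cantorLikeSet_le hm ha hlt fun k => (hmem k).2)
      (ENNReal.le_of_forall_nnreal_lt fun t ht => ?_)⟩
  rcases eq_zero_or_pos t with rfl | htpos
  · simp
  rw [← ENNReal.ofReal_coe_nnreal, ENNReal.ofReal_lt_ofReal_iff'] at ht
  exact le_dimH_cantorLikeSet hm ha htpos
    (isBigO_inv_pow_cantorA_rpow_of_dyadic ha0 h1 h2 (by omega) hlt htpos ht.1)
end

section
/- Let m = 2 and a_k = 4^{−k} for k = 1, 2, …, and let I = I_ā be the associated Cantor-like set. Then dim_H I = 0 and I is hereditarily non uniformly perfect. -/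
open MeasureTheory Filter Metric

/-!
For `m = 2` a point of `I_ā` is `∑ d_{k+1} (A_k - A_{k+1})` with binary digits. If two points
first differ at digit `n`, that digit contributes `A_n - A_{n+1}` and the remaining digits at most
`A_{n+1}`, so their distance lies in `[A_n - 2 A_{n+1}, A_n]`. When `a_k ≤ 1/3` no distance
therefore falls in `(A_{n+1}, A_n - 2 A_{n+1})`, and since `A_{n+1} / A_n = a_{n+1} → 0` these
empty annuli have arbitrarily large modulus at arbitrarily small scales, which no uniformly perfect
subset allows. For the dimension, `I_ā` is covered by `2^n` intervals of length `A_n`, and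
`2^n A_n^d → 0` for every `d > 0` by the ratio test, again because `a_n → 0`.
-/

open Set Topology

variable {a : ℕ → ℝ}

theorem cantorA_zero (a : ℕ → ℝ) : cantorA a 0 = 1 := by
  simp [cantorA]

theorem cantorA_succ (a : ℕ → ℝ) (k : ℕ) : cantorA a (k + 1) = cantorA a k * a (k + 1) :=
  Finset.prod_Icc_succ_top (Nat.le_add_left 1 k) a

theorem cantorA_pos (ha : ∀ k, 0 < a (k + 1)) (k : ℕ) : 0 < cantorA a k := by
  induction k with
  | zero => simp [cantorA_zero]
  | succ k ih => rw [cantorA_succ]; exact mul_pos ih (ha k)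

theorem three_mul_cantorA_succ_le (ha : ∀ k, 0 < a (k + 1)) (ha3 : ∀ k, a (k + 1) ≤ 3⁻¹)
    (k : ℕ) : 3 * cantorA a (k + 1) ≤ cantorA a k := by
  rw [cantorA_succ]
  nlinarith [ha3 k, cantorA_pos ha k]

theorem antitone_cantorA (ha : ∀ k, 0 < a (k + 1)) (ha1 : ∀ k, a (k + 1) ≤ 1) :
    Antitone (cantorA a) :=
  antitone_nat_of_succ_le fun k => by
    rw [cantorA_succ]
    exact mul_le_of_le_one_right (cantorA_pos ha k).le (ha1 k)

theorem summable_pow_mul_cantorA_rpow (ha : ∀ k, 0 < a (k + 1))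
    (ha0 : Tendsto a atTop (𝓝 0)) {c : ℝ} (hc : c ≠ 0) {d : ℝ} (hd : 0 < d) :
    Summable fun n => c ^ n * cantorA a n ^ d := by
  refine summable_of_ratio_test_tendsto_lt_one zero_lt_one
    (Eventually.of_forall fun n => by have := cantorA_pos ha n; positivity) ?_
  have hratio : ∀ n, ‖c ^ (n + 1) * cantorA a (n + 1) ^ d‖ / ‖c ^ n * cantorA a n ^ d‖
      = |c| * a (n + 1) ^ d := by
    intro n
    have hA := cantorA_pos ha n
    rw [cantorA_succ, Real.mul_rpow hA.le (ha n).le, Real.norm_eq_abs, Real.norm_eq_abs,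
      abs_mul, abs_mul, abs_mul, abs_pow, abs_pow, abs_of_pos (Real.rpow_pos_of_pos hA d),
      abs_of_pos (Real.rpow_pos_of_pos (ha n) d), pow_succ]
    field_simp
  simp only [hratio]
  simpa [Real.zero_rpow hd.ne'] using
    ((ha0.comp (tendsto_add_atTop_nat 1)).rpow_const (Or.inr hd.le)).const_mul |c|

theorem tendsto_cantorA (ha : ∀ k, 0 < a (k + 1)) (ha0 : Tendsto a atTop (𝓝 0)) :
    Tendsto (cantorA a) atTop (𝓝 0) := by
  simpa using (summable_pow_mul_cantorA_rpow ha ha0 one_ne_zero one_pos).tendsto_atTop_zero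

noncomputable def cantorGap (a : ℕ → ℝ) (k : ℕ) : ℝ := cantorA a k - cantorA a (k + 1)

theorem cantorGap_nonneg (hA : Antitone (cantorA a)) (k : ℕ) : 0 ≤ cantorGap a k :=
  sub_nonneg.2 (hA k.le_succ)

theorem hasSum_cantorGap_nat_add (hA : Antitone (cantorA a))
    (hA0 : Tendsto (cantorA a) atTop (𝓝 0)) (n : ℕ) :
    HasSum (fun k => cantorGap a (k + n)) (cantorA a n) := by
  refine (hasSum_iff_tendsto_nat_of_nonneg (fun k => cantorGap_nonneg hA _) _).2 ?_
  have htelescope : ∀ N,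
      ∑ k ∈ Finset.range N, cantorGap a (k + n) = cantorA a n - cantorA a (N + n) := by
    intro N
    simpa [cantorGap, Nat.add_right_comm] using
      Finset.sum_range_sub' (fun k => cantorA a (k + n)) N
  simp only [htelescope]
  simpa using tendsto_const_nhds.sub (hA0.comp (tendsto_add_atTop_nat n))

theorem norm_mul_cantorGap_le (hA : Antitone (cantorA a)) {t : ℝ} (ht : |t| ≤ 1) (k : ℕ) :
    ‖t * cantorGap a k‖ ≤ cantorGap a k := by
  rw [Real.norm_eq_abs, abs_mul, abs_of_nonneg (cantorGap_nonneg hA k)]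
  exact mul_le_of_le_one_left (cantorGap_nonneg hA k) ht

theorem summable_mul_cantorGap (hA : Antitone (cantorA a))
    (hA0 : Tendsto (cantorA a) atTop (𝓝 0)) {δ : ℕ → ℝ} (hδ : ∀ k, |δ k| ≤ 1) :
    Summable fun k => δ k * cantorGap a k :=
  (hasSum_cantorGap_nat_add hA hA0 0).summable.of_norm_bounded fun k =>
    norm_mul_cantorGap_le hA (hδ k) k

theorem abs_tsum_mul_cantorGap_nat_add_le (hA : Antitone (cantorA a))
    (hA0 : Tendsto (cantorA a) atTop (𝓝 0)) {δ : ℕ → ℝ} (hδ : ∀ k, |δ k| ≤ 1) (n : ℕ) :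
    |∑' k, δ (k + n) * cantorGap a (k + n)| ≤ cantorA a n :=
  tsum_of_norm_bounded (f := fun k => δ (k + n) * cantorGap a (k + n))
    (hasSum_cantorGap_nat_add hA hA0 n) fun k => norm_mul_cantorGap_le hA (hδ (k + n)) (k + n)

theorem abs_tsum_mul_cantorGap_mem_Icc (hA : Antitone (cantorA a))
    (hA0 : Tendsto (cantorA a) atTop (𝓝 0)) {δ : ℕ → ℝ} (hδ : ∀ k, |δ k| ≤ 1) {n : ℕ}
    (hδ_lt : ∀ k < n, δ k = 0) (hδn : |δ n| = 1) :
    |∑' k, δ k * cantorGap a k| ∈ Icc (cantorA a n - 2 * cantorA a (n + 1)) (cantorA a n) := by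
  have hsum := summable_mul_cantorGap hA hA0 hδ
  set T := ∑' k, δ (k + (n + 1)) * cantorGap a (k + (n + 1))
  have hT : |T| ≤ cantorA a (n + 1) := abs_tsum_mul_cantorGap_nat_add_le hA hA0 hδ (n + 1)
  have hsplit : ∑' k, δ k * cantorGap a k = δ n * cantorGap a n + T := by
    rw [← hsum.sum_add_tsum_nat_add n, Finset.sum_eq_zero fun k hk => by
      rw [hδ_lt k (Finset.mem_range.1 hk), zero_mul], zero_add,
      ((summable_nat_add_iff n).2 hsum).tsum_eq_zero_add]
    simp only [zero_add, add_assoc, add_comm 1 n]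
    rfl
  have hlead : |δ n * cantorGap a n| = cantorGap a n := by
    rw [abs_mul, hδn, one_mul, abs_of_nonneg (cantorGap_nonneg hA n)]
  have hgap : cantorGap a n = cantorA a n - cantorA a (n + 1) := rfl
  rw [hsplit]
  constructor
  · linarith [abs_sub_abs_le_abs_add (δ n * cantorGap a n) T]
  · linarith [abs_add_le (δ n * cantorGap a n) T]

theorem mem_cantorLikeSet_two_iff {x : ℝ} :
    x ∈ cantorLikeSet 2 a ↔
      ∃ d : ℕ → ℕ, (∀ k, d k < 2) ∧ x = ∑' k, (d (k + 1) : ℝ) * cantorGap a k := by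
  simp only [cantorLikeSet, cantorGap, mem_ofPred_eq]
  norm_num

theorem abs_natCast_le_one_of_lt_two {i : ℕ} (hi : i < 2) : |(i : ℝ)| ≤ 1 := by
  interval_cases i <;> simp

theorem abs_natCast_sub_natCast_le_one {i j : ℕ} (hi : i < 2) (hj : j < 2) :
    |(i : ℝ) - j| ≤ 1 := by
  interval_cases i <;> interval_cases j <;> norm_num

theorem abs_natCast_sub_natCast_eq_one {i j : ℕ} (hi : i < 2) (hj : j < 2) (hij : i ≠ j) :
    |(i : ℝ) - j| = 1 := by
  interval_cases i <;> interval_cases j <;> simp_all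

theorem exists_abs_sub_mem_Icc_of_mem_cantorLikeSet_two (hA : Antitone (cantorA a))
    (hA0 : Tendsto (cantorA a) atTop (𝓝 0)) {x y : ℝ} (hx : x ∈ cantorLikeSet 2 a)
    (hy : y ∈ cantorLikeSet 2 a) (hxy : x ≠ y) :
    ∃ n, |x - y| ∈ Icc (cantorA a n - 2 * cantorA a (n + 1)) (cantorA a n) := by
  obtain ⟨d, hd, rfl⟩ := mem_cantorLikeSet_two_iff.1 hx
  obtain ⟨e, he, rfl⟩ := mem_cantorLikeSet_two_iff.1 hy
  have hde : ∃ n, d (n + 1) ≠ e (n + 1) := by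
    by_contra! h
    exact hxy (by simp only [h])
  set δ : ℕ → ℝ := fun k => (d (k + 1) : ℝ) - e (k + 1)
  have hδ : ∀ k, |δ k| ≤ 1 := fun k => abs_natCast_sub_natCast_le_one (hd _) (he _)
  have hsub : (∑' k, (d (k + 1) : ℝ) * cantorGap a k) - ∑' k, (e (k + 1) : ℝ) * cantorGap a k
      = ∑' k, δ k * cantorGap a k := by
    rw [← Summable.tsum_sub
      (summable_mul_cantorGap hA hA0 fun k => abs_natCast_le_one_of_lt_two (hd (k + 1)))
      (summable_mul_cantorGap hA hA0 fun k => abs_natCast_le_one_of_lt_two (he (k + 1)))]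
    simp only [δ, sub_mul]
  refine ⟨Nat.find hde, hsub ▸ abs_tsum_mul_cantorGap_mem_Icc hA hA0 hδ (fun k hk => ?_) ?_⟩
  · simp only [δ, not_not.1 (Nat.find_min hde hk), sub_self]
  · exact abs_natCast_sub_natCast_eq_one (hd _) (he _) (Nat.find_spec hde)

theorem abs_sub_notMem_Ioo_of_mem_cantorLikeSet_two (hA : Antitone (cantorA a))
    (hA0 : Tendsto (cantorA a) atTop (𝓝 0)) (h3 : ∀ k, 3 * cantorA a (k + 1) ≤ cantorA a k)
    {x y : ℝ} (hx : x ∈ cantorLikeSet 2 a) (hy : y ∈ cantorLikeSet 2 a) (k : ℕ) :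
    |x - y| ∉ Ioo (cantorA a (k + 1)) (cantorA a k - 2 * cantorA a (k + 1)) := by
  rintro ⟨hlo, hhi⟩
  have hA_nonneg : ∀ n, 0 ≤ cantorA a n := fun n => hA.le_of_tendsto hA0 n
  obtain ⟨n, hn_lo, hn_hi⟩ := exists_abs_sub_mem_Icc_of_mem_cantorLikeSet_two hA hA0 hx hy
    (fun h => by simp [h] at hlo; linarith [hA_nonneg (k + 1)])
  rcases lt_trichotomy n k with hnk | rfl | hkn
  · linarith [h3 n, hA_nonneg (k + 1), hA (Nat.succ_le_of_lt hnk)]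
  · linarith
  · linarith [hA (Nat.succ_le_of_lt hkn)]

theorem hnup_of_forall_exists_annulus {X : Type*} [NormedAddCommGroup X] {E : Set X}
    (h : ∀ c > 0, ∀ R > 0, ∃ r ∈ Ioo 0 R, ∀ x ∈ E, ∀ y ∈ E, ‖y - x‖ ∉ Ioo (c * r) r) :
    HNUP E := by
  rintro F hFE ⟨hF, hFnt, c, hc, hannulus⟩
  obtain ⟨r, ⟨hr, hrF⟩, hr_empty⟩ := h c hc _ (diam_pos hFnt hF.isBounded)
  obtain ⟨x, hx⟩ := hFnt.nonempty
  obtain ⟨y, hy, hy_mem⟩ := hannulus x hx r hr hrF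
  exact hr_empty x (hFE hx) y (hFE hy) hy_mem

theorem hnup_cantorLikeSet_two (ha : ∀ k, 0 < a (k + 1)) (ha3 : ∀ k, a (k + 1) ≤ 3⁻¹)
    (ha0 : Tendsto a atTop (𝓝 0)) : HNUP (cantorLikeSet 2 a) := by
  have hA := antitone_cantorA ha fun k => (ha3 k).trans (by norm_num)
  have hA0 := tendsto_cantorA ha ha0
  refine hnup_of_forall_exists_annulus fun c hc R hR => ?_
  obtain ⟨k, hkR, hka⟩ := ((hA0.eventually (gt_mem_nhds hR)).and
    ((ha0.comp (tendsto_add_atTop_nat 1)).eventually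
      (gt_mem_nhds (show 0 < c / (1 + 2 * c) by positivity)))).exists
  have hAk := cantorA_pos ha k
  have hAk1 : cantorA a (k + 1) = cantorA a k * a (k + 1) := cantorA_succ a k
  -- multiplied by `A_k`, this is `A_{k+1} < c (A_k - 2 A_{k+1})`
  have hka' : a (k + 1) * (1 + 2 * c) < c := (lt_div_iff₀ (by positivity)).1 hka
  refine ⟨cantorA a k - 2 * cantorA a (k + 1), ⟨?_, ?_⟩, fun x hx y hy hmem => ?_⟩
  · nlinarith [ha3 k]
  · nlinarith [ha k]
  · refine abs_sub_notMem_Ioo_of_mem_cantorLikeSet_two hA hA0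
      (three_mul_cantorA_succ_le ha ha3) hy hx k ⟨lt_trans ?_ hmem.1, hmem.2⟩
    nlinarith

theorem cantorLikeSet_two_subset_iUnion_Icc (hA : Antitone (cantorA a))
    (hA0 : Tendsto (cantorA a) atTop (𝓝 0)) (n : ℕ) :
    cantorLikeSet 2 a ⊆ ⋃ v : Fin n → Fin 2,
      Icc (∑ i, (v i : ℝ) * cantorGap a i) (∑ i, (v i : ℝ) * cantorGap a i + cantorA a n) := by
  intro x hx
  obtain ⟨d, hd, rfl⟩ := mem_cantorLikeSet_two_iff.1 hx
  have hdigit : ∀ k, |(d (k + 1) : ℝ)| ≤ 1 := fun k => abs_natCast_le_one_of_lt_two (hd (k + 1))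
  have hsplit := ((summable_mul_cantorGap hA hA0 hdigit).sum_add_tsum_nat_add n).symm
  set tail := ∑' k, (d (k + n + 1) : ℝ) * cantorGap a (k + n)
  have htail_nonneg : 0 ≤ tail :=
    tsum_nonneg fun k => mul_nonneg (Nat.cast_nonneg _) (cantorGap_nonneg hA _)
  have htail_le : tail ≤ cantorA a n :=
    (le_abs_self _).trans (abs_tsum_mul_cantorGap_nat_add_le hA hA0 hdigit n)
  refine mem_iUnion.2 ⟨fun i => ⟨d (i + 1), hd _⟩, ?_⟩
  rw [hsplit, ← Fin.sum_univ_eq_sum_range (fun k => (d (k + 1) : ℝ) * cantorGap a k)]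
  exact ⟨le_add_of_nonneg_right htail_nonneg, by gcongr⟩

theorem hausdorffMeasure_cantorLikeSet_two_eq_zero (hA : Antitone (cantorA a))
    (hA0 : Tendsto (cantorA a) atTop (𝓝 0)) {d : ℝ} (hd : 0 ≤ d)
    (hsum : Tendsto (fun n => (2 : ℝ) ^ n * cantorA a n ^ d) atTop (𝓝 0)) :
    μH[d] (cantorLikeSet 2 a) = 0 := by
  have hA_nonneg : ∀ n, 0 ≤ cantorA a n := fun n => hA.le_of_tendsto hA0 n
  have hdiam : ∀ (n : ℕ) (p : ℝ),
      Metric.ediam (Icc p (p + cantorA a n)) = ENNReal.ofReal (cantorA a n) := fun n p => by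
    rw [Real.ediam_Icc, add_sub_cancel_left]
  have hle := Measure.hausdorffMeasure_le_liminf_sum d (cantorLikeSet 2 a)
    (fun n => ENNReal.ofReal (cantorA a n)) (by simpa using ENNReal.tendsto_ofReal hA0)
    _ (Eventually.of_forall fun n v => (hdiam n _).le)
    (Eventually.of_forall (cantorLikeSet_two_subset_iUnion_Icc hA hA0))
  have hcover_sum : ∀ n : ℕ,
      ∑ v : Fin n → Fin 2, Metric.ediam (Icc (∑ i, (v i : ℝ) * cantorGap a i)
        (∑ i, (v i : ℝ) * cantorGap a i + cantorA a n)) ^ d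
      = ENNReal.ofReal ((2 : ℝ) ^ n * cantorA a n ^ d) := by
    intro n
    simp only [hdiam, ENNReal.ofReal_rpow_of_nonneg (hA_nonneg n) hd, Finset.sum_const,
      Finset.card_univ, Fintype.card_fun, Fintype.card_fin, nsmul_eq_mul]
    rw [ENNReal.ofReal_mul (by positivity)]
    norm_num
  simp only [hcover_sum] at hle
  have hlim : Tendsto (fun n => ENNReal.ofReal ((2 : ℝ) ^ n * cantorA a n ^ d)) atTop (𝓝 0) := by
    simpa using ENNReal.tendsto_ofReal hsum
  rw [hlim.liminf_eq] at hle
  exact nonpos_iff_eq_zero.1 hle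

theorem dimH_eq_zero_of_hausdorffMeasure_eq_zero {X : Type*} [EMetricSpace X]
    [MeasurableSpace X] [BorelSpace X] {s : Set X} (h : ∀ d : ℝ, 0 < d → μH[d] s = 0) :
    dimH s = 0 := by
  refine nonpos_iff_eq_zero.1 (dimH_le fun d hd => ?_)
  rcases eq_or_ne d 0 with rfl | hd0
  · simp
  · simp [h d (NNReal.coe_pos.2 (pos_iff_ne_zero.2 hd0))] at hd

theorem dimH_cantorLikeSet_two (ha : ∀ k, 0 < a (k + 1)) (ha1 : ∀ k, a (k + 1) ≤ 1)
    (ha0 : Tendsto a atTop (𝓝 0)) : dimH (cantorLikeSet 2 a) = 0 :=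
  dimH_eq_zero_of_hausdorffMeasure_eq_zero fun _ hd =>
    hausdorffMeasure_cantorLikeSet_two_eq_zero (antitone_cantorA ha ha1) (tendsto_cantorA ha ha0)
      hd.le (summable_pow_mul_cantorA_rpow ha ha0 two_ne_zero hd).tendsto_atTop_zero

/-- For `m = 2` and `a_k = 4^{−k}`, the Cantor-like set `I` has `dim_H I = 0`
and is HNUP. -/
theorem stmt9 :
    dimH (cantorLikeSet 2 (fun k : ℕ => (4 : ℝ)⁻¹ ^ k)) = 0 ∧
      HNUP (cantorLikeSet 2 (fun k : ℕ => (4 : ℝ)⁻¹ ^ k)) := by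
  have ha : ∀ k, 0 < (4 : ℝ)⁻¹ ^ (k + 1) := fun k => by positivity
  have ha3 : ∀ k, (4 : ℝ)⁻¹ ^ (k + 1) ≤ 3⁻¹ := fun k =>
    (pow_le_of_le_one (by norm_num : (0 : ℝ) ≤ 4⁻¹) (by norm_num) k.succ_ne_zero).trans
      (by norm_num)
  have ha0 : Tendsto (fun k : ℕ => (4 : ℝ)⁻¹ ^ k) atTop (𝓝 0) :=
    tendsto_pow_atTop_nhds_zero_of_lt_one (by norm_num) (by norm_num)
  exact ⟨dimH_cantorLikeSet_two ha (fun k => (ha3 k).trans (by norm_num)) ha0,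
    hnup_cantorLikeSet_two ha ha3 ha0⟩
end
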